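/- Monotonicity of the second order scheme in two dimensions: Let N ≥ 3, h > 0, Δt > 0, D > 0. Let M_{i,j} > 0 for i,j = 1,…,N, and let u_{i,j}, v_{i,j} be reals with u_{1,j} = u_{N,j} = 0 for all j and v_{i,1} = v_{i,N} = 0 for all i. Adopt the ghost conventions M_{0,j} := M_{2,j}, M_{N+1,j} := M_{N−1,j}, M_{i,0} := M_{i,2}, M_{i,N+1} := M_{i,N−1}, u_{0,j} := −u_{2,j}, u_{N+1,j} := −u_{N−1,j}, v_{i,0} := −v_{i,2}, v_{i,N+1} := −v_{i,N−1}, and the folded values ĝ_{0,j} := g_{2,j}, ĝ_{N+1,j} := g_{N−1,j}, ĝ_{i,0} := g_{i,2}, ĝ_{i,N+1} := g_{i,N−1}, with ĝ_{i,j} = g_{i,j} otherwise. Define the N²×N² real matrix A by (Ag)_{i,j} = M_{i,j}g_{i,j} + Δt·(u_{i−1,j}ĝ_{i−1,j} − u_{i+1,j}ĝ_{i+1,j})/(2h) + Δt·(v_{i,j−1}ĝ_{i,j−1} − v_{i,j+1}ĝ_{i,j+1})/(2h) + Δt·D·[−(M_{i−1,j}+M_{i,j})ĝ_{i−1,j}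 + (M_{i−1,j}+2M_{i,j}+M_{i+1,j})g_{i,j} − (M_{i,j}+M_{i+1,j})ĝ_{i+1,j}]/(2h²) + Δt·D·[−(M_{i,j−1}+M_{i,j})ĝ_{i,j−1} + (M_{i,j−1}+2M_{i,j}+M_{i,j+1})g_{i,j} − (M_{i,j}+M_{i,j+1})ĝ_{i,j+1}]/(2h²) for all i,j = 1,…,N. Assume (i) h·max{|u_{i,j}|, |v_{i,j}|} ≤ D·min{M_{i−1,j}, M_{i+1,j}, M_{i,j}, M_{i,j−1}, M_{i,j+1}} for all i,j (using the ghost conventions), and (ii) M_{i,j} + Δt·(u_{i−1,j} − u_{i+1,j})/(2h) + Δt·(v_{i,j−1} − v_{i,j+1})/(2h) > 0 for all i,j (using the ghost conventions). Then A is a nonsingular M-matrix; in particular A is invertible and every entry of A⁻¹ is nonnegative. -/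

import Mathlib

open Matrix BigOperators

/-- Folding of grid indices `0, 1, …, N+1` (1-based) onto `Fin N` (0-based), implementing the
ghost conventions `ĝ₀ := g₂` and `ĝ_{N+1} := g_{N−1}` in each coordinate direction. -/
def foldIdx2D (N : ℕ) (hN : 3 ≤ N) (j : ℕ) : Fin N :=
  if h : 1 ≤ j ∧ j ≤ N then ⟨j - 1, by omega⟩
  else if j = 0 then ⟨1, by omega⟩
  else ⟨N - 2, by omega⟩

/-!
A matrix with nonpositive off-diagonal entries and positive row sums satisfies the discrete
maximum principle (`A x ≥ 0 ⇒ x ≥ 0`, look at a minimal entry of `x`), hence is invertible with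
nonnegative inverse. For the scheme, the row sums of `A` are the left-hand sides of the time step
constraint, and in each of the four neighbour directions the mesh constraint makes the diffusive
coefficient dominate the convective one. At the boundary the ghost conventions reflect `M` and
flip the sign of the velocity, so the mesh constraint at the mirrored node applies.
-/

namespace Matrix

variable {n K : Type*} [Fintype n] [Field K] [LinearOrder K] [IsStrictOrderedRing K]
  {A : Matrix n n K}

theorem nonneg_of_nonneg_mulVec (hoff : ∀ p q, p ≠ q → A p q ≤ 0)
    (hrow : ∀ p, 0 < ∑ q, A p q) {x : n → K} (hx : 0 ≤ A *ᵥ x) : 0 ≤ x := by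
  intro p
  show (0 : K) ≤ x p
  obtain ⟨p₀, -, hmin⟩ := Finset.exists_min_image Finset.univ x ⟨p, Finset.mem_univ p⟩
  refine le_trans ?_ (hmin p (Finset.mem_univ p))
  by_contra! hneg
  have : (A *ᵥ x) p₀ ≤ (∑ q, A p₀ q) * x p₀ := by
    rw [mulVec, dotProduct, Finset.sum_mul]
    refine Finset.sum_le_sum fun q _ => ?_
    rcases eq_or_ne q p₀ with rfl | hq
    · exact le_rfl
    · exact mul_le_mul_of_nonpos_left (hmin q (Finset.mem_univ q)) (hoff p₀ q hq.symm)
  have hx₀ : 0 ≤ (A *ᵥ x) p₀ := hx p₀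
  linarith [mul_neg_of_pos_of_neg (hrow p₀) hneg]

variable [DecidableEq n]

theorem isUnit_of_offDiag_nonpos_of_sum_pos (hoff : ∀ p q, p ≠ q → A p q ≤ 0)
    (hrow : ∀ p, 0 < ∑ q, A p q) : IsUnit A := by
  refine mulVec_injective_iff_isUnit.mp fun x y hxy => le_antisymm ?_ ?_
  · exact sub_nonneg.mp <| nonneg_of_nonneg_mulVec hoff hrow <| by
      rw [mulVec_sub, hxy, sub_self]
  · exact sub_nonneg.mp <| nonneg_of_nonneg_mulVec hoff hrow <| by
      rw [mulVec_sub, hxy, sub_self]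

theorem inv_nonneg_of_offDiag_nonpos_of_sum_pos (hoff : ∀ p q, p ≠ q → A p q ≤ 0)
    (hrow : ∀ p, 0 < ∑ q, A p q) (p q : n) : 0 ≤ A⁻¹ p q := by
  have hdet := (isUnit_iff_isUnit_det A).mp (isUnit_of_offDiag_nonpos_of_sum_pos hoff hrow)
  have hcol : A *ᵥ (A⁻¹ *ᵥ Pi.single q 1) = Pi.single q 1 := by
    rw [mulVec_mulVec, mul_nonsing_inv A hdet, one_mulVec]
  have := nonneg_of_nonneg_mulVec hoff hrow (hcol ▸ Pi.single_nonneg.mpr zero_le_one) p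
  rwa [mulVec_single_one, col_apply] at this

end Matrix

section Stencil

variable {h Δt D : ℝ}

theorem stencil_offDiag_nonpos (hh : 0 < h) (hΔt : 0 ≤ Δt) {uW uE MW MC ME gW gE : ℝ}
    (hW : h * uW ≤ D * (MW + MC)) (hE : h * -uE ≤ D * (MC + ME)) (hgW : 0 ≤ gW) (hgE : 0 ≤ gE) :
    Δt * (uW * gW - uE * gE) / (2 * h)
      + Δt * D * (-(MW + MC) * gW - (MC + ME) * gE) / (2 * h ^ 2) ≤ 0 := by
  have hsplit : Δt * (uW * gW - uE * gE) / (2 * h)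
      + Δt * D * (-(MW + MC) * gW - (MC + ME) * gE) / (2 * h ^ 2)
      = Δt / (2 * h ^ 2) * ((h * uW - D * (MW + MC)) * gW + (h * -uE - D * (MC + ME)) * gE) := by
    field_simp
    ring
  rw [hsplit]
  exact mul_nonpos_of_nonneg_of_nonpos (by positivity) <| add_nonpos
    (mul_nonpos_of_nonpos_of_nonneg (by linarith) hgW)
    (mul_nonpos_of_nonpos_of_nonneg (by linarith) hgE)

/- `m` and `w` are `M` and one velocity component along a grid line, indexed `0, …, N + 1`
with the ghost values at both ends. -/
variable {N : ℕ} {m w : ℕ → ℝ} (hN : 2 ≤ N) (hh : 0 < h) (hD : 0 ≤ D)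
  (hm : ∀ k, 1 ≤ k → k ≤ N → 0 < m k)
  (hcfl : ∀ k, 1 ≤ k → k ≤ N → h * |w k| ≤ D * min (m (k - 1)) (m (k + 1)))
include hN hh hD hm hcfl

theorem mul_le_mul_add_of_cfl_left (hm0 : m 0 = m 2) (hw0 : w 0 = -w 2) {k : ℕ} (hk : k < N) :
    h * w k ≤ D * (m k + m (k + 1)) := by
  rcases Nat.eq_zero_or_pos k with rfl | hk0
  · have hm2 := mul_nonneg hD (hm 2 (by norm_num) hN).le
    rw [hm0, hw0, mul_add]
    calc h * -w 2 ≤ h * |w 2| := mul_le_mul_of_nonneg_left (neg_le_abs _) hh.le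
      _ ≤ D * m 1 :=
          (hcfl 2 (by norm_num) hN).trans (mul_le_mul_of_nonneg_left (min_le_left _ _) hD)
      _ ≤ _ := le_add_of_nonneg_left hm2
  · have hmk := mul_nonneg hD (hm k hk0 hk.le).le
    rw [mul_add]
    calc h * w k ≤ h * |w k| := mul_le_mul_of_nonneg_left (le_abs_self _) hh.le
      _ ≤ D * m (k + 1) :=
          (hcfl k hk0 hk.le).trans (mul_le_mul_of_nonneg_left (min_le_right _ _) hD)
      _ ≤ _ := le_add_of_nonneg_left hmk

theorem mul_neg_le_mul_add_of_cfl_right (hmN : m (N + 1) = m (N - 1)) (hwN : w (N + 1) = -w (N - 1))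
    {k : ℕ} (hk : k < N) : h * -w (k + 2) ≤ D * (m (k + 1) + m (k + 2)) := by
  rcases Nat.lt_or_ge (k + 1) N with hk1 | hk1
  · have hmk := mul_nonneg hD (hm (k + 2) (by omega) hk1).le
    rw [mul_add]
    calc h * -w (k + 2) ≤ h * |w (k + 2)| := mul_le_mul_of_nonneg_left (neg_le_abs _) hh.le
      _ ≤ D * m (k + 1) :=
          (hcfl (k + 2) (by omega) hk1).trans (mul_le_mul_of_nonneg_left (min_le_left _ _) hD)
      _ ≤ _ := le_add_of_nonneg_right hmk
  · obtain rfl : k = N - 1 := by omega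
    have hmk := mul_nonneg hD (hm (N - 1) (by omega) (by omega)).le
    have hcflN := hcfl (N - 1) (by omega) (by omega)
    rw [Nat.sub_add_cancel (by omega : 1 ≤ N)] at hcflN
    rw [show N - 1 + 2 = N + 1 by omega, Nat.sub_add_cancel (by omega : 1 ≤ N), hmN, hwN, neg_neg,
      mul_add]
    calc h * w (N - 1) ≤ h * |w (N - 1)| := mul_le_mul_of_nonneg_left (le_abs_self _) hh.le
      _ ≤ D * m N := hcflN.trans (mul_le_mul_of_nonneg_left (min_le_right _ _) hD)
      _ ≤ _ := le_add_of_nonneg_right hmk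

theorem stencil_offDiag_nonpos_of_cfl (hΔt : 0 ≤ Δt) (hm0 : m 0 = m 2)
    (hw0 : w 0 = -w 2) (hmN : m (N + 1) = m (N - 1)) (hwN : w (N + 1) = -w (N - 1))
    {k : ℕ} (hk : k < N) {gW gE : ℝ} (hgW : 0 ≤ gW) (hgE : 0 ≤ gE) :
    Δt * (w k * gW - w (k + 2) * gE) / (2 * h)
      + Δt * D * (-(m k + m (k + 1)) * gW - (m (k + 1) + m (k + 2)) * gE) / (2 * h ^ 2) ≤ 0 :=
  stencil_offDiag_nonpos hh hΔt (mul_le_mul_add_of_cfl_left hN hh hD hm hcfl hm0 hw0 hk)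
    (mul_neg_le_mul_add_of_cfl_right hN hh hD hm hcfl hmN hwN hk) hgW hgE

end Stencil

theorem stmt_7_general (N : ℕ) (hN : 3 ≤ N) (h Δt D : ℝ)
    (hh : 0 < h) (hΔt : 0 < Δt) (hD : 0 < D)
    (M u v : ℕ → ℕ → ℝ)
    (hMpos : ∀ i j, 1 ≤ i → i ≤ N → 1 ≤ j → j ≤ N → 0 < M i j)
    (hMghost : ∀ j, 1 ≤ j → j ≤ N →
      M 0 j = M 2 j ∧ M (N + 1) j = M (N - 1) j ∧
      M j 0 = M j 2 ∧ M j (N + 1) = M j (N - 1))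
    (huvghost : ∀ j, 1 ≤ j → j ≤ N →
      u 0 j = -u 2 j ∧ u (N + 1) j = -u (N - 1) j ∧
      v j 0 = -v j 2 ∧ v j (N + 1) = -v j (N - 1))
    (A : Matrix (Fin N × Fin N) (Fin N × Fin N) ℝ)
    (hA : ∀ g : Fin N × Fin N → ℝ, ∀ p : Fin N × Fin N,
      A.mulVec g p =
        M (p.1.1 + 1) (p.2.1 + 1) * g p
        + Δt * (u p.1.1 (p.2.1 + 1) * g (foldIdx2D N hN p.1.1, foldIdx2D N hN (p.2.1 + 1))
            - u (p.1.1 + 2) (p.2.1 + 1) *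
                g (foldIdx2D N hN (p.1.1 + 2), foldIdx2D N hN (p.2.1 + 1))) / (2 * h)
        + Δt * (v (p.1.1 + 1) p.2.1 * g (foldIdx2D N hN (p.1.1 + 1), foldIdx2D N hN p.2.1)
            - v (p.1.1 + 1) (p.2.1 + 2) *
                g (foldIdx2D N hN (p.1.1 + 1), foldIdx2D N hN (p.2.1 + 2))) / (2 * h)
        + Δt * D * (-(M p.1.1 (p.2.1 + 1) + M (p.1.1 + 1) (p.2.1 + 1)) *
                g (foldIdx2D N hN p.1.1, foldIdx2D N hN (p.2.1 + 1))
            + (M p.1.1 (p.2.1 + 1) + 2 * M (p.1.1 + 1) (p.2.1 + 1)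
                + M (p.1.1 + 2) (p.2.1 + 1)) * g p
            - (M (p.1.1 + 1) (p.2.1 + 1) + M (p.1.1 + 2) (p.2.1 + 1)) *
                g (foldIdx2D N hN (p.1.1 + 2), foldIdx2D N hN (p.2.1 + 1))) / (2 * h ^ 2)
        + Δt * D * (-(M (p.1.1 + 1) p.2.1 + M (p.1.1 + 1) (p.2.1 + 1)) *
                g (foldIdx2D N hN (p.1.1 + 1), foldIdx2D N hN p.2.1)
            + (M (p.1.1 + 1) p.2.1 + 2 * M (p.1.1 + 1) (p.2.1 + 1)
                + M (p.1.1 + 1) (p.2.1 + 2)) * g p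
            - (M (p.1.1 + 1) (p.2.1 + 1) + M (p.1.1 + 1) (p.2.1 + 2)) *
                g (foldIdx2D N hN (p.1.1 + 1), foldIdx2D N hN (p.2.1 + 2))) / (2 * h ^ 2))
    (cond1 : ∀ i j, 1 ≤ i → i ≤ N → 1 ≤ j → j ≤ N →
      h * max |u i j| |v i j| ≤
        D * min (M (i - 1) j) (min (M (i + 1) j)
          (min (M i j) (min (M i (j - 1)) (M i (j + 1))))))
    (cond2 : ∀ i j, 1 ≤ i → i ≤ N → 1 ≤ j → j ≤ N →
      0 < M i j + Δt * (u (i - 1) j - u (i + 1) j) / (2 * h)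
            + Δt * (v i (j - 1) - v i (j + 1)) / (2 * h)) :
    (∀ p q, p ≠ q → A p q ≤ 0) ∧ IsUnit A ∧ ∀ p q, 0 ≤ A⁻¹ p q := by
  have hcflx : ∀ j, 1 ≤ j → j ≤ N → ∀ i, 1 ≤ i → i ≤ N →
      h * |u i j| ≤ D * min (M (i - 1) j) (M (i + 1) j) := by
    intro j hj1 hjN i hi1 hiN
    calc h * |u i j| ≤ h * max |u i j| |v i j| := mul_le_mul_of_nonneg_left (le_max_left _ _) hh.le
      _ ≤ _ := cond1 i j hi1 hiN hj1 hjN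
      _ ≤ _ := mul_le_mul_of_nonneg_left (le_min (by simp) (by simp)) hD.le
  have hcfly : ∀ i, 1 ≤ i → i ≤ N → ∀ j, 1 ≤ j → j ≤ N →
      h * |v i j| ≤ D * min (M i (j - 1)) (M i (j + 1)) := by
    intro i hi1 hiN j hj1 hjN
    calc h * |v i j| ≤ h * max |u i j| |v i j| := mul_le_mul_of_nonneg_left (le_max_right _ _) hh.le
      _ ≤ _ := cond1 i j hi1 hiN hj1 hjN
      _ ≤ _ := mul_le_mul_of_nonneg_left (le_min (by simp) (by simp)) hD.le
  have hoff : ∀ p q, p ≠ q → A p q ≤ 0 := by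
    intro p q hpq
    have hg : 0 ≤ (Pi.single q 1 : Fin N × Fin N → ℝ) := Pi.single_nonneg.mpr zero_le_one
    have hi : 1 ≤ p.1.1 + 1 ∧ p.1.1 + 1 ≤ N := ⟨by omega, p.1.2⟩
    have hj : 1 ≤ p.2.1 + 1 ∧ p.2.1 + 1 ≤ N := ⟨by omega, p.2.2⟩
    obtain ⟨hM0x, hMNx, -, -⟩ := hMghost _ hj.1 hj.2
    obtain ⟨hu0, huN, -, -⟩ := huvghost _ hj.1 hj.2
    obtain ⟨-, -, hM0y, hMNy⟩ := hMghost _ hi.1 hi.2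
    obtain ⟨-, -, hv0, hvN⟩ := huvghost _ hi.1 hi.2
    have hx := stencil_offDiag_nonpos_of_cfl (m := fun i => M i (p.2.1 + 1))
      (w := fun i => u i (p.2.1 + 1)) (by omega) hh hD.le
      (fun i hi1 hiN => hMpos i _ hi1 hiN hj.1 hj.2) (hcflx _ hj.1 hj.2) hΔt.le
      hM0x hu0 hMNx huN p.1.2 (hg (foldIdx2D N hN p.1.1, foldIdx2D N hN (p.2.1 + 1)))
      (hg (foldIdx2D N hN (p.1.1 + 2), foldIdx2D N hN (p.2.1 + 1)))
    have hy := stencil_offDiag_nonpos_of_cfl (m := M (p.1.1 + 1)) (w := v (p.1.1 + 1))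
      (by omega) hh hD.le (fun j hj1 hjN => hMpos _ j hi.1 hi.2 hj1 hjN)
      (hcfly _ hi.1 hi.2) hΔt.le hM0y hv0 hMNy hvN p.2.2
      (hg (foldIdx2D N hN (p.1.1 + 1), foldIdx2D N hN p.2.1))
      (hg (foldIdx2D N hN (p.1.1 + 1), foldIdx2D N hN (p.2.1 + 2)))
    rw [← col_apply A q p, ← mulVec_single_one, hA, Pi.single_eq_of_ne hpq]
    simp only [mul_zero, add_zero, zero_add]
    linarith
  have hrow : ∀ p, 0 < ∑ q, A p q := by
    intro p
    have hc := cond2 (p.1.1 + 1) (p.2.1 + 1) (by omega) p.1.2 (by omega) p.2.2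
    simp only [Nat.add_sub_cancel, Nat.reduceAdd, add_assoc] at hc
    calc 0 < _ := hc
      _ = (A *ᵥ 1) p := by rw [hA]; simp only [Pi.one_apply]; ring
      _ = ∑ q, A p q := by simp [mulVec, dotProduct]
  exact ⟨hoff, isUnit_of_offDiag_nonpos_of_sum_pos hoff hrow,
    inv_nonneg_of_offDiag_nonpos_of_sum_pos hoff hrow⟩

/-- **Monotonicity of the second order scheme in two dimensions.** Under the mesh constraint
`h max{|u_{i,j}|, |v_{i,j}|} ≤ D min{M_{i−1,j}, M_{i+1,j}, M_{i,j}, M_{i,j−1}, M_{i,j+1}}` and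
the time step constraint `M_{i,j} + Δt (u_{i−1,j} − u_{i+1,j})/(2h)
+ Δt (v_{i,j−1} − v_{i,j+1})/(2h) > 0` (with the ghost conventions and `u·n = 0` on the
boundary), the coefficient matrix `A` of the backward Euler second order finite difference
scheme (grid index of `p : Fin N × Fin N` being `(p.1+1, p.2+1)`) is a nonsingular M-matrix:
nonpositive off-diagonal entries, invertible, and `A⁻¹` entrywise nonnegative. -/
theorem stmt_7 (N : ℕ) (hN : 3 ≤ N) (h Δt D : ℝ)
    (hh : 0 < h) (hΔt : 0 < Δt) (hD : 0 < D)
    (M u v : ℕ → ℕ → ℝ)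
    (hMpos : ∀ i j, 1 ≤ i → i ≤ N → 1 ≤ j → j ≤ N → 0 < M i j)
    (hubc : ∀ j, 1 ≤ j → j ≤ N → u 1 j = 0 ∧ u N j = 0)
    (hvbc : ∀ i, 1 ≤ i → i ≤ N → v i 1 = 0 ∧ v i N = 0)
    (hMghost : ∀ j, 1 ≤ j → j ≤ N →
      M 0 j = M 2 j ∧ M (N + 1) j = M (N - 1) j ∧
      M j 0 = M j 2 ∧ M j (N + 1) = M j (N - 1))
    (huvghost : ∀ j, 1 ≤ j → j ≤ N →
      u 0 j = -u 2 j ∧ u (N + 1) j = -u (N - 1) j ∧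
      v j 0 = -v j 2 ∧ v j (N + 1) = -v j (N - 1))
    (A : Matrix (Fin N × Fin N) (Fin N × Fin N) ℝ)
    (hA : ∀ g : Fin N × Fin N → ℝ, ∀ p : Fin N × Fin N,
      A.mulVec g p =
        M (p.1.1 + 1) (p.2.1 + 1) * g p
        + Δt * (u p.1.1 (p.2.1 + 1) * g (foldIdx2D N hN p.1.1, foldIdx2D N hN (p.2.1 + 1))
            - u (p.1.1 + 2) (p.2.1 + 1) *
                g (foldIdx2D N hN (p.1.1 + 2), foldIdx2D N hN (p.2.1 + 1))) / (2 * h)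
        + Δt * (v (p.1.1 + 1) p.2.1 * g (foldIdx2D N hN (p.1.1 + 1), foldIdx2D N hN p.2.1)
            - v (p.1.1 + 1) (p.2.1 + 2) *
                g (foldIdx2D N hN (p.1.1 + 1), foldIdx2D N hN (p.2.1 + 2))) / (2 * h)
        + Δt * D * (-(M p.1.1 (p.2.1 + 1) + M (p.1.1 + 1) (p.2.1 + 1)) *
                g (foldIdx2D N hN p.1.1, foldIdx2D N hN (p.2.1 + 1))
            + (M p.1.1 (p.2.1 + 1) + 2 * M (p.1.1 + 1) (p.2.1 + 1)
                + M (p.1.1 + 2) (p.2.1 + 1)) * g p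
            - (M (p.1.1 + 1) (p.2.1 + 1) + M (p.1.1 + 2) (p.2.1 + 1)) *
                g (foldIdx2D N hN (p.1.1 + 2), foldIdx2D N hN (p.2.1 + 1))) / (2 * h ^ 2)
        + Δt * D * (-(M (p.1.1 + 1) p.2.1 + M (p.1.1 + 1) (p.2.1 + 1)) *
                g (foldIdx2D N hN (p.1.1 + 1), foldIdx2D N hN p.2.1)
            + (M (p.1.1 + 1) p.2.1 + 2 * M (p.1.1 + 1) (p.2.1 + 1)
                + M (p.1.1 + 1) (p.2.1 + 2)) * g p
            - (M (p.1.1 + 1) (p.2.1 + 1) + M (p.1.1 + 1) (p.2.1 + 2)) *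
                g (foldIdx2D N hN (p.1.1 + 1), foldIdx2D N hN (p.2.1 + 2))) / (2 * h ^ 2))
    (cond1 : ∀ i j, 1 ≤ i → i ≤ N → 1 ≤ j → j ≤ N →
      h * max |u i j| |v i j| ≤
        D * min (M (i - 1) j) (min (M (i + 1) j)
          (min (M i j) (min (M i (j - 1)) (M i (j + 1))))))
    (cond2 : ∀ i j, 1 ≤ i → i ≤ N → 1 ≤ j → j ≤ N →
      0 < M i j + Δt * (u (i - 1) j - u (i + 1) j) / (2 * h)
            + Δt * (v i (j - 1) - v i (j + 1)) / (2 * h)) :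
    (∀ p q, p ≠ q → A p q ≤ 0) ∧ IsUnit A ∧ ∀ p q, 0 ≤ A⁻¹ p q :=
  stmt_7_general N hN h Δt D hh hΔt hD M u v hMpos hMghost huvghost A hA cond1 cond2
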